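/- arXiv:2106.09990 — 5 statements merged into one kernel-verified Lean document; each statement's English description precedes it below -/
import Mathlib

section
/- Fix h ∈ Sym^{1,1}(V) and α ∈ Λ^{1,1}(V*), and let Ã ∈ End(V) satisfy g(Ã(x), y) = α(x, y) for all x, y. For t ∈ ℝ with Id + t h invertible, set Tr^ℂ_{g_t}(α) := −(1/2) tr(J ∘ (Id + t h)^{-1} ∘ Ã), which is the complex trace of α with respect to the inner product g_t(x, y) := g((Id + t h)(x), y). Then the function t ↦ Tr^ℂ_{g_t}(α) is differentiable at t = 0 with derivative −(1/2) ⟨h, ρ_g^{-1}(α)⟩_g. -/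
/-!
Inversion has derivative `a ↦ -a` at `1`, so the derivative at `t = 0` is
`-(1/2) tr(J ∘ (-h) ∘ Ã)`. From `g(Ã x, y) = α(x, y) = g(J h₀ x, y)` we get `Ã = J ∘ h₀`, and
since `h` commutes with `J` and `J² = -1`, `J ∘ (-h) ∘ J ∘ h₀ = h ∘ h₀`; finally `h₀` is
self-adjoint, so `h ∘ h₀ = h ∘ h₀*`.
-/

open RealInnerProductSpace

theorem map_ringInverse {M N F : Type*} [MonoidWithZero M] [MonoidWithZero N] [EquivLike F M N]
    [MulEquivClass F M N] (e : F) (x : M) : Ring.inverse (e x) = e (Ring.inverse x) := by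
  by_cases hx : IsUnit x
  · lift x to Mˣ using hx
    have hex : e x = (Units.map (e : M →* N) x : N) := rfl
    rw [hex, Ring.inverse_unit, Ring.inverse_unit]
    rfl
  · have hex : ¬IsUnit (e x) := fun hu =>
      hx (by simpa using hu.map (MulEquivClass.toMulEquiv e).symm)
    rw [Ring.inverse_non_unit _ hx, Ring.inverse_non_unit _ hex, map_zero]

theorem hasDerivAt_ringInverse_one_add_smul {𝕜 R : Type*} [NontriviallyNormedField 𝕜]
    [NormedRing R] [HasSummableGeomSeries R] [NormedAlgebra 𝕜 R] (a : R) :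
    HasDerivAt (fun t : 𝕜 => Ring.inverse (1 + t • a)) (-a) 0 := by
  have hinv : HasFDerivAt Ring.inverse (-ContinuousLinearMap.mulLeftRight 𝕜 R 1 1)
      ((1 : R) + (0 : 𝕜) • a) := by
    simpa using hasFDerivAt_ringInverse (𝕜 := 𝕜) (1 : Rˣ)
  have hline : HasDerivAt (fun t : 𝕜 => 1 + t • a) a 0 := by
    simpa using ((hasDerivAt_id (0 : 𝕜)).smul_const a).const_add 1
  exact (hinv.comp_hasDerivAt (0 : 𝕜) hline).congr_deriv
    (by simp : -ContinuousLinearMap.mulLeftRight 𝕜 R 1 1 a = -a)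

theorem Module.End.hasDerivAt_map_ringInverse_one_add_smul {𝕜 V F : Type*}
    [NontriviallyNormedField 𝕜] [CompleteSpace 𝕜] [NormedAddCommGroup V] [NormedSpace 𝕜 V]
    [FiniteDimensional 𝕜 V] [NormedAddCommGroup F] [NormedSpace 𝕜 F]
    (a : Module.End 𝕜 V) (L : Module.End 𝕜 V →ₗ[𝕜] F) :
    HasDerivAt (fun t : 𝕜 => L (Ring.inverse (1 + t • a))) (-L a) 0 := by
  let e := Module.End.toContinuousLinearMap (𝕜 := 𝕜) V
  have := FiniteDimensional.complete 𝕜 V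
  have hL := (LinearMap.toContinuousLinearMap (L ∘ₗ e.symm.toLinearMap)).hasFDerivAt
    |>.comp_hasDerivAt (0 : 𝕜) (hasDerivAt_ringInverse_one_add_smul (e a))
  convert hL using 1
  · ext t
    have he : 1 + t • e a = e (1 + t • a) := by rw [map_add, map_smul, map_one]
    rw [Function.comp_apply, he, map_ringInverse]
    simp
  · simp

theorem stmt_5_general {V : Type*} [NormedAddCommGroup V] [InnerProductSpace ℝ V]
    [FiniteDimensional ℝ V]
    (J : Module.End ℝ V) (hJ2 : J ∘ₗ J = -LinearMap.id)
    (h : Module.End ℝ V)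
    (hcomm : h ∘ₗ J = J ∘ₗ h)
    (α : V →ₗ[ℝ] V →ₗ[ℝ] ℝ)
    (A : Module.End ℝ V)
    (hA : ∀ x y : V, ⟪A x, y⟫ = α x y)
    (h₀ : Module.End ℝ V)
    (h₀sym : ∀ x y : V, ⟪h₀ x, y⟫ = ⟪x, h₀ y⟫)
    (hρ : ∀ x y : V, ⟪J (h₀ x), y⟫ = α x y) :
    HasDerivAt
      (fun t : ℝ =>
        -(1/2 : ℝ) * LinearMap.trace ℝ V (J ∘ₗ Ring.inverse (1 + t • h) ∘ₗ A))
      (-(1/2 : ℝ) * LinearMap.trace ℝ V (h ∘ₗ LinearMap.adjoint h₀)) 0 := by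
  have hA_eq : A = J * h₀ :=
    LinearMap.ext fun x => ext_inner_right ℝ fun y => (hA x y).trans (hρ x y).symm
  have hh₀ : LinearMap.adjoint h₀ = h₀ := LinearMap.IsSymmetric.adjoint_eq h₀sym
  have hJ2' : J * J = -1 := hJ2
  have hcomm' : h * J = J * h := hcomm
  have hderiv := Module.End.hasDerivAt_map_ringInverse_one_add_smul h
    (LinearMap.trace ℝ V ∘ₗ LinearMap.mulLeft ℝ J ∘ₗ LinearMap.mulRight ℝ A)
  have hvalue : -LinearMap.trace ℝ V (J * (h * A)) =
      LinearMap.trace ℝ V (h ∘ₗ LinearMap.adjoint h₀) := by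
    rw [← map_neg, hA_eq, hh₀, ← mul_assoc h, hcomm', ← mul_assoc, ← mul_assoc, hJ2', neg_one_mul,
      neg_mul, neg_neg]
    rfl
  rw [← hvalue]
  exact hderiv.const_mul _

/-- first variation of the complex trace. With `h ∈ Sym^{1,1}(V)`,
`α ∈ Λ^{1,1}(V*)` with associated endomorphism `Ã` and `h₀ = ρ_g⁻¹(α)`, the
function `t ↦ Tr^ℂ_{g_t}(α) = -(1/2) tr(J ∘ (Id + t h)⁻¹ ∘ Ã)` is differentiable
at `t = 0` with derivative `-(1/2)⟨h, ρ_g⁻¹(α)⟩_g`. -/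
theorem stmt_5 {V : Type*} [NormedAddCommGroup V] [InnerProductSpace ℝ V]
    [FiniteDimensional ℝ V] (m : ℕ) (hm : 1 ≤ m)
    (hdim : Module.finrank ℝ V = 2 * m)
    (J : Module.End ℝ V) (hJ2 : J ∘ₗ J = -LinearMap.id)
    (hJg : ∀ x y : V, ⟪J x, J y⟫ = ⟪x, y⟫)
    (h : Module.End ℝ V)
    (hsym : ∀ x y : V, ⟪h x, y⟫ = ⟪x, h y⟫)
    (hcomm : h ∘ₗ J = J ∘ₗ h)
    (α : V →ₗ[ℝ] V →ₗ[ℝ] ℝ)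
    (halt : ∀ x : V, α x x = 0)
    (hJinv : ∀ x y : V, α (J x) (J y) = α x y)
    (A : Module.End ℝ V)
    (hA : ∀ x y : V, ⟪A x, y⟫ = α x y)
    (h₀ : Module.End ℝ V)
    (h₀sym : ∀ x y : V, ⟪h₀ x, y⟫ = ⟪x, h₀ y⟫)
    (h₀comm : h₀ ∘ₗ J = J ∘ₗ h₀)
    (hρ : ∀ x y : V, ⟪J (h₀ x), y⟫ = α x y) :
    HasDerivAt
      (fun t : ℝ =>
        -(1/2 : ℝ) * LinearMap.trace ℝ V (J ∘ₗ Ring.inverse (1 + t • h) ∘ₗ A))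
      (-(1/2 : ℝ) * LinearMap.trace ℝ V (h ∘ₗ LinearMap.adjoint h₀)) 0 :=
  stmt_5_general J hJ2 h hcomm α A hA h₀ h₀sym hρ
end

section
/- Let h be a g-symmetric endomorphism of V and let α, β ∈ V* be linear functionals. For t ∈ ℝ small enough that g_t(x, y) := g((Id + t h)(x), y) is an inner product, let g_t*(α, β) := α(♯_{g_t} β) denote the induced inner product on the dual space V*, where ♯_{g_t} β is the unique vector with g_t(♯_{g_t} β, x) = β(x) for all x. Then the function t ↦ g_t*(α, β) is differentiable at t = 0 with derivative −g*(α ∘ h, β), where g* is the dual inner product of g and α ∘ h denotes the functional x ↦ α(h(x)). -/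
/-!
The vector `♯_{g_t} β` solves `(1 + t h) x = ♯_g β`, so near `t = 0` it equals
`(1 + t h)⁻¹ (♯_g β)`. Inversion is differentiable at `1` with derivative `u ↦ -u`, hence
`t ↦ (1 + t h)⁻¹` has derivative `-h` at `0`, and applying `α` gives the velocity
`-α (h ♯_g β) = -g*(α ∘ h, β)`.
-/

open RealInnerProductSpace Filter Topology

section OneAddSMul

variable {𝕜 R : Type*} [NontriviallyNormedField 𝕜] [NormedRing R] [NormedAlgebra 𝕜 R]

theorem hasDerivAt_one_add_smul (a : R) : HasDerivAt (fun t : 𝕜 => 1 + t • a) a 0 := by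
  simpa using ((hasDerivAt_id (0 : 𝕜)).smul_const a).const_add 1

variable [HasSummableGeomSeries R]

theorem eventually_isUnit_one_add_smul (a : R) : ∀ᶠ t in 𝓝 (0 : 𝕜), IsUnit (1 + t • a) := by
  have hunit : {x : R | IsUnit x} ∈ 𝓝 (1 + (0 : 𝕜) • a) := by simpa using Units.nhds (1 : Rˣ)
  exact (hasDerivAt_one_add_smul a).continuousAt.preimage_mem_nhds hunit

theorem hasDerivAt_inverse_one_add_smul (a : R) :
    HasDerivAt (fun t : 𝕜 => Ring.inverse (1 + t • a)) (-a) 0 :=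
  ((hasFDerivAt_ringInverse (𝕜 := 𝕜) (1 : Rˣ)).comp_hasDerivAt_of_eq 0
    (hasDerivAt_one_add_smul a) (by simp)).congr_deriv (by simp)

end OneAddSMul

theorem hasDerivAt_of_eventually_one_add_smul_apply_eq {𝕜 E : Type*} [NontriviallyNormedField 𝕜]
    [NormedAddCommGroup E] [NormedSpace 𝕜 E] [CompleteSpace E] (A : E →L[𝕜] E) {b : E}
    {s : 𝕜 → E} (hs : ∀ᶠ t in 𝓝 (0 : 𝕜), (1 + t • A) (s t) = b) : HasDerivAt s (-A b) 0 := by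
  have hinv : HasDerivAt (fun t : 𝕜 => Ring.inverse (1 + t • A) b) (-A b) 0 := by
    simpa using (hasDerivAt_inverse_one_add_smul A).clm_apply (hasDerivAt_const 0 b)
  refine hinv.congr_of_eventuallyEq ?_
  filter_upwards [hs, eventually_isUnit_one_add_smul A] with t hst hunit
  rw [← hst, ← mul_apply_eq_comp, Ring.inverse_mul_cancel _ hunit, one_apply_eq_self]

theorem stmt_6_general {V : Type*} [NormedAddCommGroup V] [InnerProductSpace ℝ V]
    [FiniteDimensional ℝ V]
    (h : Module.End ℝ V)
    (α β : V →ₗ[ℝ] ℝ)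
    (bβ : V) (hbβ : ∀ x : V, ⟪bβ, x⟫ = β x)
    (s : ℝ → V)
    (hs : ∀ᶠ t in nhds (0 : ℝ), ∀ x : V, ⟪(1 + t • h) (s t), x⟫ = β x) :
    HasDerivAt (fun t : ℝ => α (s t)) (-(α (h bβ))) 0 := by
  have : CompleteSpace V := FiniteDimensional.complete ℝ V
  have hsolve : ∀ᶠ t in 𝓝 (0 : ℝ), (1 + t • LinearMap.toContinuousLinearMap h) (s t) = bβ := by
    filter_upwards [hs] with t hst
    exact ext_inner_right ℝ fun x => (hst x).trans (hbβ x).symm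
  exact ((LinearMap.toContinuousLinearMap α).hasFDerivAt.comp_hasDerivAt 0
    (hasDerivAt_of_eventually_one_add_smul_apply_eq _ hsolve)).congr_deriv (by simp)

/-- first variation of the dual inner product. Let `h` be a
`g`-symmetric endomorphism, `α β` linear functionals, `bβ = ♯_g β` the vector
representing `β` with respect to `g`, and for `t` near `0` let `s t = ♯_{g_t} β`
be the unique vector with `g_t(s t, x) = β x` for all `x`, where
`g_t(x,y) = g((Id + t h) x, y)`.  Then `t ↦ g_t*(α, β) = α (s t)` is
differentiable at `t = 0` with derivative `-g*(α ∘ h, β) = -α (h bβ)`. -/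
theorem stmt_6 {V : Type*} [NormedAddCommGroup V] [InnerProductSpace ℝ V]
    [FiniteDimensional ℝ V]
    (h : Module.End ℝ V)
    (hsym : ∀ x y : V, ⟪h x, y⟫ = ⟪x, h y⟫)
    (α β : V →ₗ[ℝ] ℝ)
    (bβ : V) (hbβ : ∀ x : V, ⟪bβ, x⟫ = β x)
    (s : ℝ → V)
    (hs : ∀ᶠ t in nhds (0 : ℝ), ∀ x : V, ⟪(1 + t • h) (s t), x⟫ = β x) :
    HasDerivAt (fun t : ℝ => α (s t)) (-(α (h bβ))) 0 :=
  stmt_6_general h α β bβ hbβ s hs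
end

section
/- Let S be a g-symmetric endomorphism of V (not necessarily commuting with J) and define the bilinear form α on V by α(x, y) := g(S(x), J(y)) − g(S(J(x)), y). Then α is alternating and J-invariant, i.e. α ∈ Λ^{1,1}(V*), and for every h ∈ Sym^{1,1}(V) one has −(1/2) ⟨h, ρ_g^{-1}(α)⟩_g = ⟨h, S⟩_g. (This is the pointwise identity underlying the Kähler formula ddᶜu(X, Y) = g(Hess_g(u)(X), JY) − g(Hess_g(u)(JX), Y) and the simplification of the second variation of the Chern-scalar curvature at a Kähler metric.) -/
/-!
Alternation of `α` comes from the symmetry of `S`, `J`-invariance from `J² = -1`. Since `J` is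
`g`-orthogonal with `J² = -1` it is `g`-skew, so `α(x, y) = -g((JS + SJ)x, y)`; inverting `ρ_g`
gives `ρ_g⁻¹(α) = -S + JSJ`. For `h` commuting with `J`, cyclicity of the trace gives
`tr(h J S J) = tr(J h S J) = tr(h S J²) = -tr(h S)`, whence `⟨h, ρ_g⁻¹(α)⟩_g = -2 ⟨h, S⟩_g`.
-/

open RealInnerProductSpace

theorem LinearMap.trace_conj_of_comp_self_eq_neg_id {R M : Type*} [CommRing R] [AddCommGroup M]
    [Module R M] [Module.Free R M] [Module.Finite R M] {J : Module.End R M}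
    (hJ2 : J ∘ₗ J = -LinearMap.id) (A : Module.End R M) :
    LinearMap.trace R M (J ∘ₗ A ∘ₗ J) = -LinearMap.trace R M A := by
  have hcycle := LinearMap.trace_mul_comm R J (A ∘ₗ J)
  rw [Module.End.mul_eq_comp, Module.End.mul_eq_comp, LinearMap.comp_assoc, hJ2] at hcycle
  simpa using hcycle

section ComplexStructure

variable {V : Type*} [NormedAddCommGroup V] [InnerProductSpace ℝ V] {J : Module.End ℝ V}

theorem apply_apply_of_comp_self_eq_neg_id (hJ2 : J ∘ₗ J = -LinearMap.id) (x : V) :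
    J (J x) = -x :=
  LinearMap.congr_fun hJ2 x

theorem inner_apply_right_eq_neg_inner_apply_left (hJ2 : J ∘ₗ J = -LinearMap.id)
    (hJg : ∀ x y : V, ⟪J x, J y⟫ = ⟪x, y⟫) (x y : V) : ⟪x, J y⟫ = -⟪J x, y⟫ := by
  rw [← hJg x (J y), apply_apply_of_comp_self_eq_neg_id hJ2, inner_neg_right]

variable (hJ2 : J ∘ₗ J = -LinearMap.id) (hJg : ∀ x y : V, ⟪J x, J y⟫ = ⟪x, y⟫)
include hJ2 hJg

theorem inner_apply_sub_inner_apply_eq_neg_inner_anticomm (S : Module.End ℝ V) (x y : V) :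
    ⟪S x, J y⟫ - ⟪S (J x), y⟫ = -⟪(J ∘ₗ S + S ∘ₗ J) x, y⟫ := by
  rw [inner_apply_right_eq_neg_inner_apply_left hJ2 hJg, LinearMap.add_apply, inner_add_left]
  simp only [LinearMap.comp_apply]
  ring

theorem eq_neg_add_conj_of_inner_apply_eq {S h₀ : Module.End ℝ V}
    (hρ : ∀ x y : V, ⟪J (h₀ x), y⟫ = ⟪S x, J y⟫ - ⟪S (J x), y⟫) :
    h₀ = -S + J ∘ₗ S ∘ₗ J := by
  have hJh₀ : J ∘ₗ h₀ = -(J ∘ₗ S + S ∘ₗ J) := by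
    ext x
    refine ext_inner_right ℝ fun y => ?_
    rw [LinearMap.comp_apply, hρ, inner_apply_sub_inner_apply_eq_neg_inner_anticomm hJ2 hJg,
      LinearMap.neg_apply, inner_neg_left]
  have hJJ := apply_apply_of_comp_self_eq_neg_id hJ2
  ext x
  have hx := congrArg J (LinearMap.congr_fun hJh₀ x)
  simp only [LinearMap.comp_apply, LinearMap.neg_apply, LinearMap.add_apply, map_neg, map_add,
    hJJ] at hx
  simp only [LinearMap.add_apply, LinearMap.neg_apply, LinearMap.comp_apply]
  rw [← neg_neg (h₀ x), hx]
  abel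

end ComplexStructure

theorem stmt_8_general {V : Type*} [NormedAddCommGroup V] [InnerProductSpace ℝ V]
    [FiniteDimensional ℝ V]
    (J : Module.End ℝ V) (hJ2 : J ∘ₗ J = -LinearMap.id)
    (hJg : ∀ x y : V, ⟪J x, J y⟫ = ⟪x, y⟫)
    (S : Module.End ℝ V)
    (hSsym : ∀ x y : V, ⟪S x, y⟫ = ⟪x, S y⟫)
    (α : V → V → ℝ)
    (hα : ∀ x y : V, α x y = ⟪S x, J y⟫ - ⟪S (J x), y⟫) :
    -- α is alternating
    (∀ x : V, α x x = 0) ∧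
    -- α is J-invariant
    (∀ x y : V, α (J x) (J y) = α x y) ∧
    -- for every h ∈ Sym^{1,1}(V) and h₀ = ρ_g⁻¹(α):  -(1/2)⟨h, h₀⟩_g = ⟨h, S⟩_g
    (∀ h h₀ : Module.End ℝ V,
      (∀ x y : V, ⟪h x, y⟫ = ⟪x, h y⟫) → h ∘ₗ J = J ∘ₗ h →
      (∀ x y : V, ⟪h₀ x, y⟫ = ⟪x, h₀ y⟫) → h₀ ∘ₗ J = J ∘ₗ h₀ →
      (∀ x y : V, ⟪J (h₀ x), y⟫ = α x y) →
      -(1/2 : ℝ) * LinearMap.trace ℝ V (h ∘ₗ LinearMap.adjoint h₀)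
        = LinearMap.trace ℝ V (h ∘ₗ LinearMap.adjoint S)) := by
  have hJJ := apply_apply_of_comp_self_eq_neg_id hJ2
  refine ⟨fun x => ?_, fun x y => ?_, fun h h₀ _ hhJ hh₀sym _ hρ => ?_⟩
  · rw [hα, hSsym (J x) x, real_inner_comm, sub_self]
  · simp only [hα, hJJ, map_neg, inner_neg_left, inner_neg_right]
    ring
  · have hS : LinearMap.adjoint S = S := (LinearMap.isSymmetric_iff_isSelfAdjoint S).mp hSsym
    have hh₀ : LinearMap.adjoint h₀ = h₀ :=
      (LinearMap.isSymmetric_iff_isSelfAdjoint h₀).mp hh₀sym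
    have hconj : h ∘ₗ J ∘ₗ S ∘ₗ J = J ∘ₗ (h ∘ₗ S) ∘ₗ J := by
      rw [← LinearMap.comp_assoc, hhJ]
      rfl
    have hh₀_eq := eq_neg_add_conj_of_inner_apply_eq hJ2 hJg fun x y => (hρ x y).trans (hα x y)
    rw [hS, hh₀, hh₀_eq,
      LinearMap.comp_add, LinearMap.comp_neg, map_add, map_neg, hconj,
      LinearMap.trace_conj_of_comp_self_eq_neg_id hJ2]
    ring

/-- for `S` a `g`-symmetric endomorphism, the bilinear form
`α(x,y) := g(Sx, Jy) - g(SJx, y)` is alternating and `J`-invariant, i.e.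
`α ∈ Λ^{1,1}(V*)`, and for every `h ∈ Sym^{1,1}(V)` one has
`-(1/2)⟨h, ρ_g⁻¹(α)⟩_g = ⟨h, S⟩_g`, where `⟨A,B⟩_g = tr(A ∘ B^{*_g})`. -/
theorem stmt_8 {V : Type*} [NormedAddCommGroup V] [InnerProductSpace ℝ V]
    [FiniteDimensional ℝ V] (m : ℕ) (hm : 1 ≤ m)
    (hdim : Module.finrank ℝ V = 2 * m)
    (J : Module.End ℝ V) (hJ2 : J ∘ₗ J = -LinearMap.id)
    (hJg : ∀ x y : V, ⟪J x, J y⟫ = ⟪x, y⟫)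
    (S : Module.End ℝ V)
    (hSsym : ∀ x y : V, ⟪S x, y⟫ = ⟪x, S y⟫)
    (α : V → V → ℝ)
    (hα : ∀ x y : V, α x y = ⟪S x, J y⟫ - ⟪S (J x), y⟫) :
    -- α is alternating
    (∀ x : V, α x x = 0) ∧
    -- α is J-invariant
    (∀ x y : V, α (J x) (J y) = α x y) ∧
    -- for every h ∈ Sym^{1,1}(V) and h₀ = ρ_g⁻¹(α):  -(1/2)⟨h, h₀⟩_g = ⟨h, S⟩_g
    (∀ h h₀ : Module.End ℝ V,
      (∀ x y : V, ⟪h x, y⟫ = ⟪x, h y⟫) → h ∘ₗ J = J ∘ₗ h →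
      (∀ x y : V, ⟪h₀ x, y⟫ = ⟪x, h₀ y⟫) → h₀ ∘ₗ J = J ∘ₗ h₀ →
      (∀ x y : V, ⟪J (h₀ x), y⟫ = α x y) →
      -(1/2 : ℝ) * LinearMap.trace ℝ V (h ∘ₗ LinearMap.adjoint h₀)
        = LinearMap.trace ℝ V (h ∘ₗ LinearMap.adjoint S)) :=
  stmt_8_general J hJ2 hJg S hSsym α hα
end

section
/- Let X, Y be real Banach spaces, U ⊆ X an open set, f : U → Y an infinitely (Fréchet) differentiable map, and x₀ ∈ U. Assume f is a submersion at x₀, i.e. the derivative f'(x₀) : X → Y is surjective and there exists a closed subspace Z ⊆ X such that X = ker(f'(x₀)) ⊕ Z as a topological direct sum and the restriction of f'(x₀) to Z is an isomorphism of Banach spaces onto Y. Then f is linearization stable at x₀: for every v ∈ ker(f'(x₀)) there exist ε > 0 and an infinitely differentiable curve x : (−ε, ε) → X with x(0) = x₀, x'(0) = v, x(t) ∈ U and f(x(t)) = f(x₀) for all t ∈ (−ε, ε). -/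
open Set ContinuousLinearMap

/-- a smooth map between Banach spaces which is a submersion at a
point `x₀` (the derivative is surjective and its kernel splits, with a closed
complement `Z` on which the derivative restricts to a Banach space isomorphism
onto `Y`) is linearization stable at `x₀`: every `v ∈ ker f'(x₀)` is the
initial velocity of a smooth curve through `x₀` along which `f` is constant. -/
theorem stmt_9 {X Y : Type*}
    [NormedAddCommGroup X] [NormedSpace ℝ X] [CompleteSpace X]
    [NormedAddCommGroup Y] [NormedSpace ℝ Y] [CompleteSpace Y]
    (U : Set X) (hU : IsOpen U) (f : X → Y) (hf : ContDiffOn ℝ (⊤ : ℕ∞) f U)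
    (x₀ : X) (hx₀ : x₀ ∈ U)
    (f' : X →L[ℝ] Y) (hf' : HasFDerivAt f f' x₀)
    (hsurj : Function.Surjective f')
    (Z : Submodule ℝ X) (hZclosed : IsClosed (Z : Set X))
    (hcompl : IsCompl (LinearMap.ker (f' : X →ₗ[ℝ] Y)) Z)
    (e : Z ≃L[ℝ] Y) (he : ∀ z : Z, e z = f' (z : X)) :
    ∀ v ∈ LinearMap.ker (f' : X →ₗ[ℝ] Y),
      ∃ ε > (0 : ℝ), ∃ c : ℝ → X,
        ContDiffOn ℝ (⊤ : ℕ∞) c (Set.Ioo (-ε) ε) ∧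
        c 0 = x₀ ∧ HasDerivAt c v 0 ∧
        ∀ t ∈ Set.Ioo (-ε) ε, c t ∈ U ∧ f (c t) = f x₀ := by
  intro v hv
  classical
  set K := LinearMap.ker (f' : X →ₗ[ℝ] Y) with hK
  have hKclosed : IsClosed (K : Set X) := ContinuousLinearMap.isClosed_ker f'
  haveI : CompleteSpace K := hKclosed.completeSpace_coe
  set p : X →L[ℝ] K := K.linearProjOfClosedCompl Z hcompl hKclosed hZclosed with hpdef
  have hpcoe : ⇑p = ⇑(K.linearProjOfIsCompl Z hcompl) :=
    Submodule.coe_continuous_linearProjOfClosedCompl' hcompl hKclosed hZclosed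
  have hpapp : ∀ k : K, p (k : X) = k := fun k => by
    rw [hpcoe]; exact Submodule.linearProjOfIsCompl_apply_left hcompl k
  have hfr : LinearMap.range (f' : X →ₗ[ℝ] Y) = ⊤ := LinearMap.range_eq_top.2 hsurj
  have hpr : LinearMap.range (p : X →ₗ[ℝ] K) = ⊤ := LinearMap.range_eq_top.2 fun k => ⟨k, hpapp k⟩
  have hpker : LinearMap.ker (p : X →ₗ[ℝ] K) = Z := by
    ext x
    rw [LinearMap.mem_ker, ← Submodule.linearProjOfIsCompl_ker (q := Z) hcompl,
      LinearMap.mem_ker, ContinuousLinearMap.coe_coe, hpcoe]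
    rfl
  set φ : X ≃L[ℝ] Y × K :=
    equivProdOfSurjectiveOfIsCompl f' p hfr hpr (by rw [hpker]; exact hcompl) with hφdef
  have hφapp : ∀ x, φ x = (f' x, p x) := fun x =>
    equivProdOfSurjectiveOfIsCompl_apply hfr hpr _ x
  set g : X → Y × K := fun x => (f x, p x) with hgdef
  have hφcoe : (φ : X →L[ℝ] Y × K) = f'.prod p := by
    apply ContinuousLinearMap.ext
    intro x
    simpa using hφapp x
  -- derivatives of g
  set D : X → (X →L[ℝ] Y × K) := fun b => (fderiv ℝ f b).prod p with hDdef
  have hgD : ∀ b ∈ U, HasFDerivAt g (D b) b := by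
    intro b hb
    exact (((hf.differentiableOn (by simp)).differentiableAt
      (hU.mem_nhds hb)).hasFDerivAt).prodMk p.hasFDerivAt
  have hDx₀ : D x₀ = (φ : X →L[ℝ] Y × K) := by
    rw [hφcoe, hDdef]
    simp [hf'.fderiv]
  have hga : ContDiffAt ℝ (⊤ : ℕ∞) g x₀ :=
    (hf.contDiffAt (hU.mem_nhds hx₀)).prodMk p.contDiff.contDiffAt
  have hgd : HasFDerivAt g (φ : X →L[ℝ] Y × K) x₀ := hDx₀ ▸ hgD x₀ hx₀
  have hstrict : HasStrictFDerivAt g (φ : X →L[ℝ] Y × K) x₀ :=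
    hga.hasStrictFDerivAt' hgd (by simp)
  set Φ := hstrict.toOpenPartialHomeomorph g with hΦdef
  have hΦcoe : ⇑Φ = g := rfl
  have hsrc : x₀ ∈ Φ.source := hstrict.mem_toOpenPartialHomeomorph_source
  have htgt : g x₀ ∈ Φ.target := hstrict.image_mem_toOpenPartialHomeomorph_target
  have hsymm0 : Φ.symm (g x₀) = x₀ := Φ.left_inv hsrc
  have hsymm_deriv : HasFDerivAt Φ.symm (φ.symm : Y × K →L[ℝ] X) (g x₀) :=
    hstrict.to_localInverse.hasFDerivAt
  -- continuity of the derivative, and a neighbourhood of invertibility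
  have hDcont : ContinuousOn D U := by
    have h1 : ContinuousOn (fderiv ℝ f) U :=
      hf.continuousOn_fderiv_of_isOpen hU (by simp)
    have h2 : Continuous fun q : (X →L[ℝ] Y) × (X →L[ℝ] K) => q.1.prod q.2 :=
      (ContinuousLinearMap.prodₗᵢ (𝕜 := ℝ) (E := X) (F := Y) (G := K) ℝ).continuous
    exact h2.comp_continuousOn (h1.prodMk continuousOn_const)
  set R : Set (X →L[ℝ] Y × K) := Set.range ((↑) : (X ≃L[ℝ] Y × K) → X →L[ℝ] Y × K) with hR
  have hRopen : IsOpen R := ContinuousLinearEquiv.isOpen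
  set V : Set X := U ∩ D ⁻¹' R with hVdef
  have hVopen : IsOpen V := hDcont.isOpen_inter_preimage hU hRopen
  have hx₀V : x₀ ∈ V := ⟨hx₀, ⟨φ, hDx₀.symm⟩⟩
  -- the curve
  set w : K := ⟨v, hv⟩ with hwdef
  set γ : ℝ → Y × K := fun t => (f x₀, p x₀ + t • w) with hγdef
  have hγcont : Continuous γ := by fun_prop
  have hγ0 : γ 0 = g x₀ := by simp [hγdef, hgdef]
  set S : Set (Y × K) := Φ.target ∩ Φ.symm ⁻¹' V with hSdef
  have hSopen : IsOpen S := Φ.isOpen_inter_preimage_symm hVopen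
  have hγ0S : γ 0 ∈ S := by
    rw [hγ0]
    exact ⟨htgt, by simpa [hsymm0] using hx₀V⟩
  have hWopen : IsOpen (γ ⁻¹' S) := hSopen.preimage hγcont
  obtain ⟨ε, hε, hball⟩ := Metric.isOpen_iff.1 hWopen 0 hγ0S
  have hIoo : Set.Ioo (-ε) ε = Metric.ball (0 : ℝ) ε := by
    rw [Real.ball_eq_Ioo]; simp
  refine ⟨ε, hε, fun t => Φ.symm (γ t), ?_, ?_, ?_, ?_⟩
  · -- smoothness
    intro t ht
    rw [hIoo] at ht
    have htS : γ t ∈ S := hball ht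
    have h1 : γ t ∈ Φ.target := htS.1
    have h2U : Φ.symm (γ t) ∈ U := (htS.2 : Φ.symm (γ t) ∈ V).1
    obtain ⟨ψ, hψ⟩ := (htS.2 : Φ.symm (γ t) ∈ V).2
    have hgb : HasFDerivAt g (ψ : X →L[ℝ] Y × K) (Φ.symm (γ t)) := by
      rw [hψ]; exact hgD _ h2U
    have hgcb : ContDiffAt ℝ (⊤ : ℕ∞) g (Φ.symm (γ t)) :=
      (hf.contDiffAt (hU.mem_nhds h2U)).prodMk p.contDiff.contDiffAt
    have hsymmt : ContDiffAt ℝ (⊤ : ℕ∞) Φ.symm (γ t) :=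
      Φ.contDiffAt_symm h1 hgb hgcb
    have hγsmooth : ContDiff ℝ (⊤ : ℕ∞) γ :=
      contDiff_const.prodMk (contDiff_const.add (contDiff_id.smul contDiff_const))
    exact ((hsymmt.comp t hγsmooth.contDiffAt)).contDiffWithinAt
  · show Φ.symm (γ 0) = x₀
    rw [hγ0, hsymm0]
  · -- initial velocity
    have hγd : HasDerivAt γ ((0 : Y), w) 0 := by
      apply HasDerivAt.prodMk (hasDerivAt_const 0 (f x₀))
      simpa using ((hasDerivAt_id (0:ℝ)).smul_const w).const_add (p x₀)
    have hl : HasFDerivAt Φ.symm (φ.symm : Y × K →L[ℝ] X) (γ 0) := by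
      rw [hγ0]; exact hsymm_deriv
    have := hl.comp_hasDerivAt 0 hγd
    have hφv : φ v = ((0 : Y), w) := by
      rw [hφapp v]
      have h1 : f' v = 0 := hv
      have h2 : p v = w := hpapp w
      rw [h1, h2]
    have hsv : φ.symm ((0 : Y), w) = v := by
      rw [← hφv, ContinuousLinearEquiv.symm_apply_apply]
    simpa [hsv, Function.comp_def] using this
  · -- stays in U, f constant
    intro t ht
    rw [hIoo] at ht
    have htS : γ t ∈ S := hball ht
    have h2U : Φ.symm (γ t) ∈ U := (htS.2 : Φ.symm (γ t) ∈ V).1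
    refine ⟨h2U, ?_⟩
    have hri : Φ (Φ.symm (γ t)) = γ t := Φ.right_inv htS.1
    have : g (Φ.symm (γ t)) = γ t := hri
    have hfst := congrArg Prod.fst this
    simpa [hgdef, hγdef] using hfst
end

section
/- Let X, Y be real Banach spaces, U ⊆ X an open set, f : U → Y a twice continuously (Fréchet) differentiable map, and x₀ ∈ U. Let h ∈ ker(f'(x₀)) and suppose there exist ε > 0 and a twice continuously differentiable curve c : (−ε, ε) → U with c(0) = x₀, c'(0) = h and f(c(t)) = f(x₀) for all t ∈ (−ε, ε). Then for every continuous linear functional u : Y → ℝ that vanishes on the range of f'(x₀), one has u(f''(x₀)(h, h)) = 0, where f''(x₀) denotes the second Fréchet derivative of f at x₀ viewed as a continuous symmetric bilinear map X × X → Y. (This is the abstract form of the Fischer–Marsden obstruction showing that linearization stability forces the vanishing of ∫_M u · (scal^Ch)''_{g₀}(h, h) ν_{g₀} for all u ∈ ker(γ*_{g₀}) and h ∈ ker(γ_{g₀}).) -/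
/-!
Along the curve, `f ∘ c` is constant, so its first derivative `f'(c t)(c' t)` vanishes identically.
Differentiating once more at `0` gives `f''(x₀)(h, h) + f'(x₀)(c''(0)) = 0`, and `u` kills the
second summand because it lies in the range of `f'(x₀)`.
-/

open Filter Topology

section LevelCurve

variable {𝕜 E F : Type*} [NontriviallyNormedField 𝕜]
  [NormedAddCommGroup E] [NormedSpace 𝕜 E] [NormedAddCommGroup F] [NormedSpace 𝕜 F]
  {f : E → F} {c : 𝕜 → E} {t : 𝕜} {y : F}

theorem HasDerivAt.eq_zero_of_eventuallyEq_const {g : 𝕜 → F} {a : F}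
    (hg : HasDerivAt g a t) (hconst : g =ᶠ[𝓝 t] fun _ => y) : a = 0 :=
  hg.unique ((hasDerivAt_const t y).congr_of_eventuallyEq hconst)

theorem HasFDerivAt.apply_eq_zero_of_eventually_const_comp {L : E →L[𝕜] F} {v : E}
    (hf : HasFDerivAt f L (c t)) (hc : HasDerivAt c v t)
    (hconst : ∀ᶠ s in 𝓝 t, f (c s) = y) : L v = 0 :=
  (hf.comp_hasDerivAt t hc).eq_zero_of_eventuallyEq_const hconst

theorem HasFDerivAt.second_apply_add_apply_eq_zero_of_eventually_const_comp
    {f' : E → E →L[𝕜] F} {f'' : E →L[𝕜] E →L[𝕜] F} {c' c'' : 𝕜 → E}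
    (hf' : ∀ᶠ s in 𝓝 t, HasFDerivAt f (f' (c s)) (c s)) (hf'' : HasFDerivAt f' f'' (c t))
    (hc : ∀ᶠ s in 𝓝 t, HasDerivAt c (c' s) s) (hc' : HasDerivAt c' (c'' t) t)
    (hconst : ∀ᶠ s in 𝓝 t, f (c s) = y) :
    f'' (c' t) (c' t) + f' (c t) (c'' t) = 0 := by
  have first_variation : (fun s => f' (c s) (c' s)) =ᶠ[𝓝 t] fun _ => 0 := by
    filter_upwards [hf', hc, hconst.eventually_nhds] with s hfs hcs hconsts
    exact hfs.apply_eq_zero_of_eventually_const_comp hcs hconsts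
  exact ((hf''.comp_hasDerivAt t hc.self_of_nhds).clm_apply hc').eq_zero_of_eventuallyEq_const
    first_variation

end LevelCurve

theorem stmt_10_general {X Y : Type*}
    [NormedAddCommGroup X] [NormedSpace ℝ X]
    [NormedAddCommGroup Y] [NormedSpace ℝ Y]
    (U : Set X) (f : X → Y)
    (x₀ : X)
    (f' : X → X →L[ℝ] Y) (hf' : ∀ x ∈ U, HasFDerivAt f (f' x) x)
    (f'' : X →L[ℝ] X →L[ℝ] Y) (hf'' : HasFDerivAt f' f'' x₀)
    (h : X)
    (ε : ℝ) (hε : 0 < ε) (c : ℝ → X) (c' c'' : ℝ → X)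
    (hcU : ∀ t ∈ Set.Ioo (-ε) ε, c t ∈ U)
    (hc0 : c 0 = x₀)
    (hcd : ∀ t ∈ Set.Ioo (-ε) ε, HasDerivAt c (c' t) t)
    (hcd2 : ∀ t ∈ Set.Ioo (-ε) ε, HasDerivAt c' (c'' t) t)
    (hc'0 : c' 0 = h)
    (hconst : ∀ t ∈ Set.Ioo (-ε) ε, f (c t) = f x₀) :
    ∀ u : Y →L[ℝ] ℝ, (∀ x : X, u (f' x₀ x) = 0) → u (f'' h h) = 0 := by
  intro u hu
  have hI : Set.Ioo (-ε) ε ∈ 𝓝 (0 : ℝ) := Ioo_mem_nhds (by linarith) hε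
  have second_variation :=
    HasFDerivAt.second_apply_add_apply_eq_zero_of_eventually_const_comp (f' := f')
      (eventually_of_mem hI fun t ht => hf' _ (hcU t ht)) (hc0 ▸ hf'')
      (eventually_of_mem hI hcd) (hcd2 0 (mem_of_mem_nhds hI)) (eventually_of_mem hI hconst)
  rw [hc0, hc'0] at second_variation
  simpa [hu] using congrArg u second_variation

/-- abstract Fischer–Marsden obstruction: let `f` be a `C²` map
between Banach spaces, with first derivative `f' x` at each `x ∈ U` and second
derivative `f''` at `x₀`. If `h ∈ ker f'(x₀)` is tangent to a `C²` curve `c`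
through `x₀` along which `f` is constant, then every continuous linear
functional `u` vanishing on the range of `f'(x₀)` satisfies
`u (f''(x₀)(h, h)) = 0`. -/
theorem stmt_10 {X Y : Type*}
    [NormedAddCommGroup X] [NormedSpace ℝ X] [CompleteSpace X]
    [NormedAddCommGroup Y] [NormedSpace ℝ Y] [CompleteSpace Y]
    (U : Set X) (hU : IsOpen U) (f : X → Y) (hf : ContDiffOn ℝ 2 f U)
    (x₀ : X) (hx₀ : x₀ ∈ U)
    (f' : X → X →L[ℝ] Y) (hf' : ∀ x ∈ U, HasFDerivAt f (f' x) x)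
    (f'' : X →L[ℝ] X →L[ℝ] Y) (hf'' : HasFDerivAt f' f'' x₀)
    (h : X) (hker : f' x₀ h = 0)
    (ε : ℝ) (hε : 0 < ε) (c : ℝ → X) (c' c'' : ℝ → X)
    (hcU : ∀ t ∈ Set.Ioo (-ε) ε, c t ∈ U)
    (hc0 : c 0 = x₀)
    (hcd : ∀ t ∈ Set.Ioo (-ε) ε, HasDerivAt c (c' t) t)
    (hcd2 : ∀ t ∈ Set.Ioo (-ε) ε, HasDerivAt c' (c'' t) t)
    (hc'0 : c' 0 = h)
    (hconst : ∀ t ∈ Set.Ioo (-ε) ε, f (c t) = f x₀) :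
    ∀ u : Y →L[ℝ] ℝ, (∀ x : X, u (f' x₀ x) = 0) → u (f'' h h) = 0 :=
  stmt_10_general U f x₀ f' hf' f'' hf'' h ε hε c c' c'' hcU hc0 hcd hcd2 hc'0 hconst
end
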